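/- arXiv:1212.2912 — 6 statements merged into one kernel-verified Lean document; each statement's English description precedes it below -/
import Mathlib

section
/- Let R be a ring, M an R-module generated by a family {g_i}_{i∈ι} of nonzero elements, F = ⊕_{i∈ι} R the free module with basis {e_i}, and π : F → M the map sending e_i to g_i. Let K = ker π (the relationship submodule) and let ℛ ⊆ K be a generating set of K. Define a relation on ι by: i ~ j if i = j, or if there exists r ∈ ℛ whose i-th and j-th coordinates are both nonzero; and take the transitive closure. If C ⊆ ι is a union of equivalence classes of this relation, then the submodule of M generated by {g_i : i ∈ C} is a direct summand of M, with complement generated by {g_i : i ∉ C}. -/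
/-- If `C` is a union of equivalence classes of the relation generated by
"`i ~ j` iff some relation `r ∈ ℛ` has nonzero `i`-th and `j`-th coordinates", then the
submodule generated by `{g i : i ∈ C}` is a direct summand, with complement generated by
`{g i : i ∉ C}`. -/
theorem stmt1 (R : Type*) [Ring R] (M : Type*) [AddCommGroup M] [Module R M]
    (ι : Type*) (g : ι → M) (hg0 : ∀ i, g i ≠ 0)
    (hgen : Submodule.span R (Set.range g) = ⊤)
    (ℛ : Set (ι →₀ R))
    (hspan : Submodule.span R ℛ = LinearMap.ker (Finsupp.linearCombination R g))
    (C : Set ι)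
    (hC : ∀ i j : ι,
      Relation.ReflTransGen (fun a b => ∃ r ∈ ℛ, r a ≠ 0 ∧ r b ≠ 0) i j → (i ∈ C ↔ j ∈ C)) :
    IsCompl (Submodule.span R (g '' C)) (Submodule.span R (g '' Cᶜ)) := by
  set π := Finsupp.linearCombination R g with hπ
  constructor
  · rw [Submodule.disjoint_def]
    intro x hxC hxCc
    rw [Finsupp.span_image_eq_map_linearCombination] at hxC hxCc
    obtain ⟨a, ha, rfl⟩ := hxC
    obtain ⟨b, hb, hab⟩ := hxCc
    have hker : a - b ∈ LinearMap.ker π := by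
      rw [LinearMap.mem_ker, map_sub, hab, sub_self]
    rw [← hspan] at hker
    have hsplit : Submodule.span R ℛ ≤
        (LinearMap.ker π ⊓ Finsupp.supported R R C) ⊔
          (LinearMap.ker π ⊓ Finsupp.supported R R Cᶜ) := by
      refine Submodule.span_le.mpr fun r hr => ?_
      have hrk : r ∈ LinearMap.ker π := hspan ▸ Submodule.subset_span hr
      show r ∈ (LinearMap.ker π ⊓ Finsupp.supported R R C ⊔
        LinearMap.ker π ⊓ Finsupp.supported R R Cᶜ : Submodule R (ι →₀ R))
      by_cases h : ∃ i ∈ r.support, i ∈ C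
      · obtain ⟨i, hi, hiC⟩ := h
        apply Submodule.mem_sup_left
        exact ⟨hrk, (Finsupp.mem_supported R r).mpr fun j hj =>
          (hC i j (Relation.ReflTransGen.single
            ⟨r, hr, Finsupp.mem_support_iff.mp hi, Finsupp.mem_support_iff.mp hj⟩)).mp hiC⟩
      · apply Submodule.mem_sup_right
        exact ⟨hrk, (Finsupp.mem_supported R r).mpr fun j hj hjC => h ⟨j, hj, hjC⟩⟩
    obtain ⟨u, hu, v, hv, huv⟩ := Submodule.mem_sup.mp (hsplit hker)
    have h1 : a - u ∈ Finsupp.supported R R C := sub_mem ha hu.2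
    have h2 : a - u ∈ Finsupp.supported R R Cᶜ := by
      have heq : a - u = b + v := by
        have h2 : a = u + v + b := by rw [huv]; abel
        rw [h2]; abel
      rw [heq]; exact add_mem hb hv.2
    have hdisj : Disjoint (Finsupp.supported R R C) (Finsupp.supported R R Cᶜ) :=
      Finsupp.disjoint_supported_supported disjoint_compl_right
    have hzero : a - u = 0 := (Submodule.disjoint_def.mp hdisj) _ h1 h2
    have hau : a = u := by rwa [sub_eq_zero] at hzero
    rw [hau]
    exact hu.1
  · rw [codisjoint_iff, ← Submodule.span_union, ← Set.image_union, Set.union_compl_self,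
      Set.image_univ, hgen]
end

section
/- Let R be a ring, M an R-module with generators {g_i}_{i∈ι}, relationship submodule K ⊆ F = ⊕_{i∈ι} R, and generating set ℛ of K as above. If the associated equivalence relation on ι has at least two equivalence classes, then M is decomposable, i.e., M is a direct sum of two nonzero submodules. -/
/-- If the associated equivalence relation on the index set of generators
has at least two equivalence classes, then `M` is decomposable: it is the (internal)
direct sum of two nonzero submodules. -/
theorem stmt2 (R : Type*) [Ring R] (M : Type*) [AddCommGroup M] [Module R M]
    (ι : Type*) (g : ι → M) (hg0 : ∀ i, g i ≠ 0)
    (hgen : Submodule.span R (Set.range g) = ⊤)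
    (ℛ : Set (ι →₀ R))
    (hspan : Submodule.span R ℛ = LinearMap.ker (Finsupp.linearCombination R g))
    (htwo : ∃ i j : ι,
      ¬ Relation.ReflTransGen (fun a b => ∃ r ∈ ℛ, r a ≠ 0 ∧ r b ≠ 0) i j) :
    ∃ N N' : Submodule R M, N ≠ ⊥ ∧ N' ≠ ⊥ ∧ IsCompl N N' := by
  classical
  obtain ⟨i₀, j₀, hij⟩ := htwo
  set step : ι → ι → Prop := fun a b => ∃ r ∈ ℛ, r a ≠ 0 ∧ r b ≠ 0 with hstepdef
  set S : Set ι := {i | Relation.ReflTransGen step i₀ i} with hSdef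
  have hi₀S : i₀ ∈ S := Relation.ReflTransGen.refl
  have hj₀S : j₀ ∉ S := hij
  -- S is closed under `step`
  have hclosed : ∀ a ∈ S, ∀ b, step a b → b ∈ S := fun a ha b hab => ha.tail hab
  refine ⟨Submodule.span R (g '' S), Submodule.span R (g '' Sᶜ), ?_, ?_, ?_, ?_⟩
  · intro h
    exact hg0 i₀ (by
      have : g i₀ ∈ Submodule.span R (g '' S) :=
        Submodule.subset_span ⟨i₀, hi₀S, rfl⟩
      rwa [h, Submodule.mem_bot] at this)
  · intro h
    exact hg0 j₀ (by
      have : g j₀ ∈ Submodule.span R (g '' Sᶜ) :=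
        Submodule.subset_span ⟨j₀, hj₀S, rfl⟩
      rwa [h, Submodule.mem_bot] at this)
  · -- disjoint
    rw [Submodule.disjoint_def]
    intro x hx hx'
    obtain ⟨f, hf, hfx⟩ := (Finsupp.mem_span_image_iff_linearCombination R).1 hx
    obtain ⟨f', hf', hfx'⟩ := (Finsupp.mem_span_image_iff_linearCombination R).1 hx'
    let π : (ι →₀ R) →ₗ[R] (ι →₀ R) :=
      { toFun := fun v => v.filter (· ∈ S)
        map_add' := fun a b => Finsupp.filter_add
        map_smul' := fun c a => Finsupp.filter_smul }
    have hπdef : ∀ v : ι →₀ R, π v = v.filter (· ∈ S) := fun _ => rfl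
    -- π maps span ℛ into span ℛ
    have hmap : Submodule.map π (Submodule.span R ℛ) ≤ Submodule.span R ℛ := by
      rw [Submodule.map_span, Submodule.span_le]
      rintro _ ⟨r, hr, rfl⟩
      by_cases hcase : ∃ a ∈ S, r a ≠ 0
      · obtain ⟨a, haS, hra⟩ := hcase
        have : π r = r := by
          rw [hπdef, Finsupp.filter_eq_self_iff]
          intro b hb
          exact hclosed a haS b ⟨r, hr, hra, hb⟩
        rw [this]; exact Submodule.subset_span hr
      · push_neg at hcase
        have : π r = 0 := by
          rw [hπdef, Finsupp.filter_eq_zero_iff]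
          intro b hb
          exact hcase b hb
        rw [this]; exact Submodule.zero_mem _
    have hker : f - f' ∈ Submodule.span R ℛ := by
      rw [hspan, LinearMap.mem_ker, map_sub, hfx, hfx', sub_self]
    have hπf : π (f - f') = f := by
      rw [map_sub, hπdef, hπdef]
      have h1 : f.filter (· ∈ S) = f := by
        rw [Finsupp.filter_eq_self_iff]
        intro b hb
        exact hf (Finsupp.mem_support_iff.2 hb)
      have h2 : f'.filter (· ∈ S) = 0 := by
        rw [Finsupp.filter_eq_zero_iff]
        intro b hbS
        by_contra hb
        exact (hf' (Finsupp.mem_support_iff.2 hb)) hbS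
      rw [h1, h2, sub_zero]
    have hfker : f ∈ Submodule.span R ℛ := by
      rw [← hπf]
      exact hmap ⟨f - f', hker, rfl⟩
    rw [hspan, LinearMap.mem_ker] at hfker
    rw [← hfx, hfker]
  · -- codisjoint
    rw [codisjoint_iff, ← Submodule.span_union, ← Set.image_union,
      Set.union_compl_self, Set.image_univ, hgen]
end

section
/- Let R be a commutative ring, and let A be a u × v matrix and B a u' × v matrix over R with the same row space in R^v. If A and B are both minimal in the sense that u = u' and there exist matrices P (u × u) and P' (u × u) with B = P·A, A = P'·B, and P'·P invertible, then A is equivalent to a matrix with at least two blocks if and only if B is. -/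
/-- A matrix is blockable if it is equivalent (via invertible `P`, `Q`) to a block diagonal
matrix `diag(B, C)` with both blocks having a positive number of columns. -/
def Blockable {R : Type*} [Ring R] {u v : ℕ} (A : Matrix (Fin u) (Fin v) R) : Prop :=
  ∃ (s t s' t' : ℕ) (hu : u = s + s') (hv : v = t + t'),
    0 < t ∧ 0 < t' ∧
    ∃ (P : Matrix (Fin u) (Fin u) R) (Q : Matrix (Fin v) (Fin v) R)
      (B : Matrix (Fin s) (Fin t) R) (C : Matrix (Fin s') (Fin t') R),
      IsUnit P ∧ IsUnit Q ∧
      P * A * Q = Matrix.reindex (finSumFinEquiv.trans (finCongr hu.symm))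
        (finSumFinEquiv.trans (finCongr hv.symm)) (Matrix.fromBlocks B 0 0 C)

/-- If `A` and `B` have the same row space, the same number `u = u'` of rows,
and `B = P·A`, `A = P'·B` with `P'·P` invertible, then `A` is blockable iff `B` is. -/
theorem stmt5 (R : Type*) [CommRing R] (u v : ℕ)
    (A B : Matrix (Fin u) (Fin v) R)
    (hrow : Submodule.span R (Set.range fun i => A i) =
      Submodule.span R (Set.range fun i => B i))
    (P P' : Matrix (Fin u) (Fin u) R)
    (hB : B = P * A) (hA : A = P' * B) (hPP : IsUnit (P' * P)) :
    Blockable A ↔ Blockable B := by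
  have key : ∀ (M : Matrix (Fin u) (Fin u) R) (X : Matrix (Fin u) (Fin v) R),
      IsUnit M → Blockable X → Blockable (M * X) := by
    rintro M X hM ⟨s, t, s', t', hu, hv, ht, ht', P0, Q, Bb, C, hP0, hQ, heq⟩
    obtain ⟨Mu, rfl⟩ := hM
    refine ⟨s, t, s', t', hu, hv, ht, ht', P0 * ↑Mu⁻¹, Q, Bb, C,
      hP0.mul Mu⁻¹.isUnit, hQ, ?_⟩
    rw [← heq]
    have : (↑Mu⁻¹ : Matrix (Fin u) (Fin u) R) * (↑Mu : Matrix (Fin u) (Fin u) R) = 1 := Mu.inv_mul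
    calc P0 * ↑Mu⁻¹ * ((Mu : Matrix (Fin u) (Fin u) R) * X) * Q
        = P0 * (((↑Mu⁻¹ : Matrix (Fin u) (Fin u) R) * ↑Mu) * X) * Q := by
          rw [Matrix.mul_assoc P0, Matrix.mul_assoc (↑Mu⁻¹ : Matrix (Fin u) (Fin u) R)]
      _ = P0 * X * Q := by rw [this, Matrix.one_mul]
  have hdet : IsUnit ((P' * P).det) := hPP.map (Matrix.detMonoidHom (n := Fin u) (R := R))
  rw [Matrix.det_mul] at hdet
  have hP : IsUnit P := (Matrix.isUnit_iff_isUnit_det _).mpr (isUnit_of_mul_isUnit_right hdet)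
  have hP' : IsUnit P' := (Matrix.isUnit_iff_isUnit_det _).mpr (isUnit_of_mul_isUnit_left hdet)
  constructor
  · intro h; rw [hB]; exact key _ _ hP h
  · intro h; rw [hA]; exact key _ _ hP' h
end

section
/- Let (R, m, k) be a commutative Noetherian local ring and let x, y ∈ R be two socle elements (i.e., m·x = m·y = 0) whose images in the k-vector space soc(R) = (0 :_R m) are linearly independent. For each natural number n ≥ 1, let A_n be the n × (n+1) matrix over R with A[i][i] = x, A[i][i+1] = y, and all other entries 0. Then the R-module Z_n = R^(n+1) / (row space of A_n) is indecomposable. -/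
/-!
Every endomorphism of `Z_n` lifts to a matrix `U` on `R^(n+1)` that carries the relations
`x eᵢ + y eᵢ₊₁` back into the row space of `A_n`. Because `x` and `y` are linearly independent
modulo `m`, consecutive rows of `U` reduce to `(c, 0)` and `(0, c)` for a single vector `c` over
`k`, which forces `U` to be a scalar `r` modulo `m`. For the projection onto a direct summand,
`r` or `1 - r` is a unit since `R` is local, so one of the two summands lies in `m Z_n` and
vanishes by Nakayama's lemma.
-/

open IsLocalRing Matrix Submodule

namespace Submodule

variable {R M : Type*} [CommRing R] [AddCommGroup M] [Module R M] {N N' : Submodule R M}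

theorem le_smul_of_isCompl_of_le_smul_top (I : Ideal R) (h : IsCompl N N') (hN' : N' ≤ I • ⊤) :
    N' ≤ I • N' := by
  intro z hz
  rw [← h.sup_eq_top, smul_sup] at hN'
  obtain ⟨a, ha, b, hb, rfl⟩ := mem_sup.1 (hN' hz)
  have ha' : a ∈ N ⊓ N' :=
    ⟨smul_le_right ha, by simpa using N'.sub_mem hz (smul_le_right hb)⟩
  rw [h.inf_eq_bot, mem_bot] at ha'
  simpa [ha'] using hb

theorem eq_bot_of_isCompl_of_le_maximalIdeal_smul_top [IsLocalRing R] [Module.Finite R M]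
    (h : IsCompl N N') (hN' : N' ≤ maximalIdeal R • ⊤) : N' = ⊥ :=
  have : Module.Finite R N' := .of_surjective _ (projectionOnto_surjective h.symm)
  eq_bot_of_le_smul_of_le_jacobson_bot _ _ (Module.Finite.iff_fg.1 this)
    (le_smul_of_isCompl_of_le_smul_top _ h hN') (jacobson_eq_maximalIdeal ⊥ bot_ne_top).ge

theorem eq_bot_or_eq_bot_of_isCompl [IsLocalRing R] [Module.Finite R M]
    (hM : ∀ f : Module.End R M, ∃ r : R, ∀ z, f z - r • z ∈ maximalIdeal R • (⊤ : Submodule R M))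
    (h : IsCompl N N') : N = ⊥ ∨ N' = ⊥ := by
  obtain ⟨r, hr⟩ := hM (N.projection N' h)
  rcases isUnit_or_isUnit_one_sub_self r with hu | hu
  · refine .inr <| eq_bot_of_isCompl_of_le_maximalIdeal_smul_top h fun z hz => ?_
    have : r • z ∈ maximalIdeal R • (⊤ : Submodule R M) := by
      simpa [projection_apply_of_mem_right h hz] using hr z
    exact (smul_mem_iff_of_isUnit _ hu).1 this
  · refine .inl <| eq_bot_of_isCompl_of_le_maximalIdeal_smul_top h.symm fun z hz => ?_
    have : (1 - r) • z ∈ maximalIdeal R • (⊤ : Submodule R M) := by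
      simpa [projection_apply_of_mem_left h hz, sub_smul] using hr z
    exact (smul_mem_iff_of_isUnit _ hu).1 this

end Submodule

theorem LinearMap.apply_mem_smul_top_of_forall_mem {R M ι : Type*} [CommRing R] [AddCommGroup M]
    [Module R M] [Fintype ι] [DecidableEq ι] (g : (ι → R) →ₗ[R] M) {I : Ideal R} {v : ι → R}
    (hv : ∀ i, v i ∈ I) : g v ∈ I • (⊤ : Submodule R M) := by
  rw [← Finset.univ_sum_single v, map_sum]
  refine sum_mem fun i _ => ?_
  rw [← mul_one (v i), ← smul_eq_mul, Pi.single_smul', map_smul]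
  exact smul_mem_smul (hv i) mem_top

namespace Matrix

variable {α : Type*} [Zero α] {n : ℕ} {U : Matrix (Fin (n + 1)) (Fin (n + 1)) α}

theorem apply_eq_zero_of_lt (hzero : ∀ i : Fin n, U i.succ 0 = 0)
    (hshift : ∀ i j : Fin n, U i.succ j.succ = U i.castSucc j.castSucc) {p q : Fin (n + 1)}
    (h : q < p) : U p q = 0 := by
  induction q using Fin.induction generalizing p with
  | zero =>
    obtain ⟨i, rfl⟩ := Fin.exists_succ_eq.2 h.ne'
    exact hzero i
  | succ j ih =>
    obtain ⟨i, rfl⟩ := Fin.exists_succ_eq.2 (j.succ_pos.trans h).ne'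
    rw [hshift]
    exact ih (Fin.succ_lt_succ_iff.1 h)

theorem eq_diagonal_of_rows_eq_snoc_cons
    (hU : ∀ i : Fin n, ∃ c : Fin n → α, U i.castSucc = Fin.snoc c 0 ∧ U i.succ = Fin.cons 0 c) :
    U = diagonal fun _ => U 0 0 := by
  choose c hsnoc hcons using hU
  have hzero (i : Fin n) : U i.succ 0 = 0 := by rw [hcons, Fin.cons_zero]
  have hlast (i : Fin n) : U i.castSucc (Fin.last n) = 0 := by rw [hsnoc, Fin.snoc_last]
  have hshift (i j : Fin n) : U i.succ j.succ = U i.castSucc j.castSucc := by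
    rw [hcons, hsnoc, Fin.cons_succ, Fin.snoc_castSucc]
  have hdiag (p : Fin (n + 1)) : U p p = U 0 0 := by
    induction p using Fin.induction with
    | zero => rfl
    | succ i ih => rw [hshift, ih]
  ext p q
  rcases lt_trichotomy p q with h | rfl | h
  · rw [diagonal_apply_ne _ h.ne]
    -- reversing both indices exchanges the entries above and below the diagonal
    simpa using apply_eq_zero_of_lt (U := U.submatrix Fin.rev Fin.rev)
      (fun i => by simpa [Fin.rev_succ] using hlast i.rev)
      (fun i j => by simp [Fin.rev_succ, Fin.rev_castSucc, hshift])
      (Fin.rev_lt_rev.2 h)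
  · rw [diagonal_apply_eq, hdiag]
  · rw [diagonal_apply_ne _ h.ne']
    exact apply_eq_zero_of_lt hzero hshift h

end Matrix

section Bidiagonal

variable {R : Type*} [CommRing R] {n : ℕ}

theorem Fin.sum_smul_single_castSucc (c : Fin n → R) :
    ∑ i, c i • Pi.single i.castSucc 1 = (Fin.snoc c 0 : Fin (n + 1) → R) := by
  conv_rhs => rw [← Finset.univ_sum_single (Fin.snoc c 0 : Fin (n + 1) → R)]
  simp [Fin.sum_univ_castSucc, ← Pi.single_smul']

theorem Fin.sum_smul_single_succ (c : Fin n → R) :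
    ∑ i, c i • Pi.single i.succ 1 = (Fin.cons 0 c : Fin (n + 1) → R) := by
  conv_rhs => rw [← Finset.univ_sum_single (Fin.cons 0 c : Fin (n + 1) → R)]
  simp [Fin.sum_univ_succ, ← Pi.single_smul']

def Matrix.bidiagonal (x y : R) : Matrix (Fin n) (Fin (n + 1)) R :=
  of fun i j => if j = i.castSucc then x else if j = i.succ then y else 0

theorem Matrix.bidiagonal_apply (x y : R) (i : Fin n) :
    bidiagonal x y i = x • Pi.single i.castSucc 1 + y • Pi.single i.succ 1 := by
  ext j
  by_cases h : j = i.castSucc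
  · simp [bidiagonal, h, (Fin.castSucc_lt_succ (i := i)).ne]
  · simp [bidiagonal, h, Pi.single_apply]

theorem Matrix.sum_smul_bidiagonal (x y : R) (c : Fin n → R) :
    ∑ i, c i • bidiagonal x y i = x • Fin.snoc c 0 + y • Fin.cons 0 c := by
  simp only [bidiagonal_apply, smul_add, smul_comm (c _), Finset.sum_add_distrib,
    ← Finset.smul_sum, Fin.sum_smul_single_castSucc, Fin.sum_smul_single_succ]

variable [IsLocalRing R] {x y : R}

theorem span_bidiagonal_ne_top (hx : x ∈ maximalIdeal R) :
    span R (Set.range (bidiagonal (n := n) x y)) ≠ ⊤ := by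
  intro htop
  have h1 : Pi.single 0 1 ∈ span R (Set.range (bidiagonal (n := n) x y)) := by simp [htop]
  obtain ⟨c, hc⟩ := (mem_span_range_iff_exists_fun R).1 h1
  rw [sum_smul_bidiagonal] at hc
  have h0 := congr_fun hc 0
  simp only [Pi.add_apply, Pi.smul_apply, smul_eq_mul, Fin.cons_zero, mul_zero, add_zero,
    Pi.single_eq_same] at h0
  exact (maximalIdeal.isMaximal R).ne_top
    ((Ideal.eq_top_iff_one _).2 (h0 ▸ Ideal.mul_mem_right _ _ hx))

theorem residue_comp_eq_snoc_cons
    (hind : ∀ a b : R, a * x + b * y = 0 → a ∈ maximalIdeal R ∧ b ∈ maximalIdeal R)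
    {u v : Fin (n + 1) → R} (h : x • u + y • v ∈ span R (Set.range (bidiagonal x y))) :
    ∃ c : Fin n → ResidueField R, residue R ∘ u = Fin.snoc c 0 ∧ residue R ∘ v = Fin.cons 0 c := by
  obtain ⟨c, hc⟩ := (mem_span_range_iff_exists_fun R).1 h
  rw [sum_smul_bidiagonal] at hc
  set s : Fin (n + 1) → R := Fin.snoc c 0
  set t : Fin (n + 1) → R := Fin.cons 0 c
  have hres (j : Fin (n + 1)) : residue R (u j) = residue R (s j) ∧
      residue R (v j) = residue R (t j) := by
    have hj := congr_fun hc j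
    simp only [Pi.add_apply, Pi.smul_apply, smul_eq_mul] at hj
    obtain ⟨hu, hv⟩ := hind (u j - s j) (v j - t j) (by linear_combination -hj)
    rw [← residue_eq_zero_iff, map_sub, sub_eq_zero] at hu hv
    exact ⟨hu, hv⟩
  refine ⟨residue R ∘ c, ?_, ?_⟩
  · rw [← map_zero (residue R), ← Fin.comp_snoc]
    exact funext fun j => (hres j).1
  · rw [← map_zero (residue R), ← Fin.comp_cons]
    exact funext fun j => (hres j).2

theorem exists_sub_smul_mem_maximalIdeal_smul_top
    (hind : ∀ a b : R, a * x + b * y = 0 → a ∈ maximalIdeal R ∧ b ∈ maximalIdeal R)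
    (f : Module.End R ((Fin (n + 1) → R) ⧸ span R (Set.range (bidiagonal x y)))) :
    ∃ r : R, ∀ z, f z - r • z ∈ maximalIdeal R • (⊤ : Submodule R _) := by
  choose u hu using fun p => mkQ_surjective _ (f (mkQ _ (Pi.single p 1)))
  have hlift : f ∘ₗ mkQ _ = mkQ _ ∘ₗ (of u).vecMulLinear :=
    LinearMap.pi_ext' fun p => LinearMap.ext_ring <| by simp [hu]
  have hrel (i : Fin n) :
      x • u i.castSucc + y • u i.succ ∈ span R (Set.range (bidiagonal x y)) := by
    rw [← Quotient.mk_eq_zero, ← mkQ_apply]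
    calc mkQ _ (x • u i.castSucc + y • u i.succ) = mkQ _ (bidiagonal x y i ᵥ* of u) := by
          simp [bidiagonal_apply, add_vecMul, smul_vecMul]
      _ = f (mkQ _ (bidiagonal x y i)) := (LinearMap.congr_fun hlift _).symm
      _ = 0 := by
          rw [mkQ_apply, (Quotient.mk_eq_zero _).2 (subset_span ⟨i, rfl⟩ :
            bidiagonal x y i ∈ span R (Set.range (bidiagonal x y))), map_zero]
  have hscalar : (of u).map (residue R) = diagonal fun _ => residue R (u 0 0) :=
    eq_diagonal_of_rows_eq_snoc_cons fun i => residue_comp_eq_snoc_cons hind (hrel i)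
  refine ⟨u 0 0, fun z => ?_⟩
  obtain ⟨v, rfl⟩ := mkQ_surjective _ z
  rw [← LinearMap.comp_apply, hlift, LinearMap.comp_apply, ← map_smul, ← map_sub]
  refine (mkQ (span R (Set.range (bidiagonal x y)))).apply_mem_smul_top_of_forall_mem fun q => ?_
  rw [← residue_eq_zero_iff]
  simp [RingHom.map_vecMul, hscalar, mul_comm]

end Bidiagonal

theorem stmt6_general (R : Type*) [CommRing R] [IsLocalRing R]
    (x y : R)
    (hind : ∀ a b : R, a * x + b * y = 0 →
      a ∈ IsLocalRing.maximalIdeal R ∧ b ∈ IsLocalRing.maximalIdeal R)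
    (n : ℕ)
    (A : Matrix (Fin n) (Fin (n + 1)) R)
    (hA : ∀ i j, A i j = if j = i.castSucc then x else if j = i.succ then y else 0) :
    Nontrivial ((Fin (n + 1) → R) ⧸ Submodule.span R (Set.range fun i => A i)) ∧
    ∀ N N' : Submodule R ((Fin (n + 1) → R) ⧸ Submodule.span R (Set.range fun i => A i)),
      IsCompl N N' → N = ⊥ ∨ N' = ⊥ := by
  obtain rfl : A = bidiagonal x y := Matrix.ext hA
  have hx : x ∈ maximalIdeal R := by simpa using (hind y (-x) (by ring)).2
  exact ⟨Quotient.nontrivial_iff.2 (span_bidiagonal_ne_top hx),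
    fun N N' => eq_bot_or_eq_bot_of_isCompl (exists_sub_smul_mem_maximalIdeal_smul_top hind)⟩

/-- Over a commutative Noetherian local ring with two socle elements `x`, `y`
linearly independent over the residue field, the module
`Z_n = R^(n+1) / rowspace(A_n)` (with `A_n` the `n × (n+1)` matrix with `x` on the diagonal
and `y` on the superdiagonal) is indecomposable. -/
theorem stmt6 (R : Type*) [CommRing R] [IsNoetherianRing R] [IsLocalRing R]
    (x y : R)
    (hx : ∀ a ∈ IsLocalRing.maximalIdeal R, a * x = 0)
    (hy : ∀ a ∈ IsLocalRing.maximalIdeal R, a * y = 0)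
    (hind : ∀ a b : R, a * x + b * y = 0 →
      a ∈ IsLocalRing.maximalIdeal R ∧ b ∈ IsLocalRing.maximalIdeal R)
    (n : ℕ) (hn : 1 ≤ n)
    (A : Matrix (Fin n) (Fin (n + 1)) R)
    (hA : ∀ i j, A i j = if j = i.castSucc then x else if j = i.succ then y else 0) :
    Nontrivial ((Fin (n + 1) → R) ⧸ Submodule.span R (Set.range fun i => A i)) ∧
    ∀ N N' : Submodule R ((Fin (n + 1) → R) ⧸ Submodule.span R (Set.range fun i => A i)),
      IsCompl N N' → N = ⊥ ∨ N' = ⊥ :=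
  stmt6_general R x y hind n A hA
end

section
/- Let k be a field, and let A_n be the n × (n+1) matrix over the polynomial ring k[X,Y] with A[i][i] = X, A[i][i+1] = Y, and zeros elsewhere. Then A_n is not equivalent over k to a block diagonal matrix: there do not exist invertible matrices P ∈ GL_n(k) and Q ∈ GL_{n+1}(k) and a splitting with 0 < t < n+1 columns in the first block such that P·A_n·Q = diag(B, C), where B has s rows and t columns and C has n−s rows and n+1−t columns. -/
/-!
Substitute `X ↦ x`, `Y ↦ -1` with `x` transcendental over `k`. Over `k(x)` the kernel of `A_n` is
spanned by `(1, x, …, x^n)`, whose coordinates are `k`-linearly independent; hence after any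
change of coordinates `Q ∈ GL_{n+1}(k)` every nonzero kernel vector has all coordinates nonzero.
A block diagonal `n × (n+1)` matrix with two nonempty column blocks, however, has one block with
more columns than rows, hence a nonzero kernel vector vanishing on the other block.
-/

open Matrix Polynomial

theorem Transcendental.linearIndependent_pow {R A : Type*} [CommRing R] [Ring A] [Algebra R A]
    {x : A} (hx : Transcendental R x) : LinearIndependent R (x ^ · : ℕ → A) := by
  have := (basisMonomials R).linearIndependent.map' (Polynomial.aeval x).toLinearMap
    (LinearMap.ker_eq_bot.2 (transcendental_iff_injective.1 hx))
  simpa [coe_basisMonomials, Function.comp_def] using this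

theorem LinearIndependent.mulVec_map_apply_ne_zero {k K ι m : Type*} [CommRing k]
    [CommRing K] [Algebra k K] [Fintype ι] {v : ι → K} (hv : LinearIndependent k v)
    (N : Matrix m ι k) {ρ : m} (hρ : N ρ ≠ 0) : (N.map (algebraMap k K) *ᵥ v) ρ ≠ 0 := by
  intro h
  refine hρ (funext fun j => Fintype.linearIndependent_iff.1 hv (N ρ) ?_ j)
  simpa [mulVec, dotProduct, Algebra.smul_def] using h

namespace Matrix

theorem exists_mulVec_eq_zero_of_card_lt {K m n : Type*} [Field K] [Fintype m]
    [Fintype n] (M : Matrix m n K) (h : Fintype.card m < Fintype.card n) :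
    ∃ v ≠ 0, M *ᵥ v = 0 := by
  have hker : LinearMap.ker M.mulVecLin ≠ ⊥ := fun hbot => by
    have := LinearMap.finrank_le_finrank_of_injective (LinearMap.ker_eq_bot.1 hbot)
    simp only [Module.finrank_fintype_fun_eq_card] at this
    omega
  obtain ⟨v, hv, hv0⟩ := Submodule.exists_mem_ne_zero_of_ne_bot hker
  exact ⟨v, hv0, hv⟩

theorem exists_fromBlocks_mulVec_eq_zero_apply_eq_zero {K m₁ m₂ n₁ n₂ : Type*} [Field K]
    [Fintype m₁] [Fintype m₂] [Fintype n₁] [Fintype n₂] [Nonempty n₁] [Nonempty n₂]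
    (B : Matrix m₁ n₁ K) (C : Matrix m₂ n₂ K)
    (h : Fintype.card m₁ + Fintype.card m₂ < Fintype.card n₁ + Fintype.card n₂) :
    ∃ v ≠ 0, fromBlocks B 0 0 C *ᵥ v = 0 ∧ ∃ j, v j = 0 := by
  by_cases h₁ : Fintype.card m₁ < Fintype.card n₁
  · obtain ⟨u, hu0, hu⟩ := B.exists_mulVec_eq_zero_of_card_lt h₁
    refine ⟨Sum.elim u 0, ?_, ?_, Sum.inr (Classical.arbitrary n₂), rfl⟩
    · exact fun h => hu0 (funext fun i => congrFun h (Sum.inl i))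
    · simp [fromBlocks_mulVec, hu]
  · obtain ⟨u, hu0, hu⟩ := C.exists_mulVec_eq_zero_of_card_lt (by omega)
    refine ⟨Sum.elim 0 u, ?_, ?_, Sum.inl (Classical.arbitrary n₁), rfl⟩
    · exact fun h => hu0 (funext fun i => congrFun h (Sum.inr i))
    · simp [fromBlocks_mulVec, hu]

def bidiagonal_s10 {R : Type*} [Zero R] (n : ℕ) (a b : R) : Matrix (Fin n) (Fin (n + 1)) R :=
  of fun i j => if j = i.castSucc then a else if j = i.succ then b else 0

theorem bidiagonal_map {R S : Type*} [Zero R] [Zero S] {f : R → S} (hf : f 0 = 0) (n : ℕ)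
    (a b : R) : (bidiagonal_s10 n a b).map f = bidiagonal_s10 n (f a) (f b) := by
  ext i j
  simp only [bidiagonal_s10, map_apply, of_apply]
  split_ifs <;> simp [hf]

theorem bidiagonal_mulVec_apply {R : Type*} [NonUnitalNonAssocSemiring R] (n : ℕ) (a b : R)
    (v : Fin (n + 1) → R) (i : Fin n) :
    (bidiagonal_s10 n a b *ᵥ v) i = a * v i.castSucc + b * v i.succ := by
  have hne : i.castSucc ≠ i.succ := Fin.castSucc_lt_succ.ne
  simp only [bidiagonal_s10, mulVec, dotProduct, of_apply, ite_mul, zero_mul]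
  rw [Fintype.sum_eq_add _ _ hne fun j hj => by simp [hj.1, hj.2]]
  simp [hne.symm]

theorem eq_pow_mul_of_bidiagonal_mulVec_eq_zero {R : Type*} [CommRing R] {n : ℕ} {x : R}
    {v : Fin (n + 1) → R} (hv : bidiagonal_s10 n x (-1) *ᵥ v = 0) (j : Fin (n + 1)) :
    v j = x ^ (j : ℕ) * v 0 := by
  induction j using Fin.induction with
  | zero => simp
  | succ i ih =>
    have := congrFun hv i
    rw [bidiagonal_mulVec_apply, Pi.zero_apply] at this
    rw [Fin.val_succ, pow_succ, mul_right_comm, ← Fin.val_castSucc, ← ih]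
    linear_combination -this

theorem apply_ne_zero_of_bidiagonal_equiv_mulVec_eq_zero {k K : Type*} [Field k] [CommRing K] [IsDomain K]
    [Algebra k K] {n : ℕ} {x : K} (hx : Transcendental k x) {P : Matrix (Fin n) (Fin n) k}
    {Q : Matrix (Fin (n + 1)) (Fin (n + 1)) k} (hP : IsUnit P) (hQ : IsUnit Q)
    {w : Fin (n + 1) → K} (hw0 : w ≠ 0)
    (hw : (P.map (algebraMap k K) * bidiagonal_s10 n x (-1) * Q.map (algebraMap k K)) *ᵥ w = 0)
    (ρ : Fin (n + 1)) : w ρ ≠ 0 := by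
  set v := Q.map (algebraMap k K) *ᵥ w
  have hv : bidiagonal_s10 n x (-1) *ᵥ v = 0 := by
    refine mulVec_injective_of_isUnit (hP.map (algebraMap k K).mapMatrix) ?_
    simpa [v, mulVec_mulVec, Matrix.mul_assoc] using hw
  have hQinv : (Q⁻¹).map (algebraMap k K) * Q.map (algebraMap k K) = 1 := by
    rw [← Matrix.map_mul, nonsing_inv_mul Q ((isUnit_iff_isUnit_det Q).1 hQ),
      Matrix.map_one _ (map_zero _) (map_one _)]
  have hw_eq : w = (Q⁻¹).map (algebraMap k K) *ᵥ v := by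
    rw [mulVec_mulVec, hQinv, one_mulVec]
  have hv_pow : v = v 0 • fun j : Fin (n + 1) => x ^ (j : ℕ) :=
    funext fun j => by
      rw [eq_pow_mul_of_bidiagonal_mulVec_eq_zero hv j, Pi.smul_apply, smul_eq_mul, mul_comm]
  have hv0 : v 0 ≠ 0 := fun h => hw0 (by rw [hw_eq, hv_pow, h, zero_smul, mulVec_zero])
  have hrow : Q⁻¹ ρ ≠ 0 :=
    (linearIndependent_rows_iff_isUnit.2 (isUnit_nonsing_inv_iff.2 hQ)).ne_zero ρ
  rw [hw_eq, hv_pow, mulVec_smul, Pi.smul_apply, smul_eq_mul]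
  exact mul_ne_zero hv0
    ((hx.linearIndependent_pow.comp _ Fin.val_injective).mulVec_map_apply_ne_zero _ hrow)

end Matrix

/-- The `n × (n+1)` matrix over `k[X,Y]` with `X` on the diagonal and `Y` on
the superdiagonal is not equivalent, via invertible matrices `P ∈ GL_n(k)`, `Q ∈ GL_{n+1}(k)`
with entries in `k`, to a block diagonal matrix `diag(B, C)` with `0 < t < n+1` columns in
the first block. -/
theorem stmt10 (k : Type*) [Field k] (n : ℕ)
    (A : Matrix (Fin n) (Fin (n + 1)) (MvPolynomial (Fin 2) k))
    (hA : ∀ i j, A i j = if j = i.castSucc then MvPolynomial.X 0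
      else if j = i.succ then MvPolynomial.X 1 else 0) :
    ¬ ∃ (s t : ℕ) (hs : s ≤ n) (ht0 : 0 < t) (htv : t < n + 1)
        (P : Matrix (Fin n) (Fin n) k) (Q : Matrix (Fin (n + 1)) (Fin (n + 1)) k)
        (B : Matrix (Fin s) (Fin t) (MvPolynomial (Fin 2) k))
        (C : Matrix (Fin (n - s)) (Fin (n + 1 - t)) (MvPolynomial (Fin 2) k)),
      IsUnit P ∧ IsUnit Q ∧
      P.map (algebraMap k (MvPolynomial (Fin 2) k)) * A *
          Q.map (algebraMap k (MvPolynomial (Fin 2) k)) =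
        Matrix.reindex (finSumFinEquiv.trans (finCongr (Nat.add_sub_cancel' hs)))
          (finSumFinEquiv.trans (finCongr (Nat.add_sub_cancel' htv.le)))
          (Matrix.fromBlocks B 0 0 C) := by
  rintro ⟨s, t, hs, ht0, htv, P, Q, B, C, hP, hQ, heq⟩
  let φ := MvPolynomial.aeval (R := k) ![(RatFunc.X : RatFunc k), -1]
  have hA' : A.map φ = bidiagonal_s10 n RatFunc.X (-1) := by
    have : A = bidiagonal_s10 n (MvPolynomial.X 0) (MvPolynomial.X 1) := Matrix.ext hA
    rw [this, bidiagonal_map (map_zero φ)]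
    simp [φ]
  have hφ : ⇑φ ∘ algebraMap k (MvPolynomial (Fin 2) k) = algebraMap k (RatFunc k) :=
    funext φ.commutes
  have heq' := congrArg (Matrix.map · φ) heq
  simp only [Matrix.map_mul, Matrix.map_map, hφ, hA', reindex_apply, ← submatrix_map,
    fromBlocks_map, Matrix.map_zero _ (map_zero φ)] at heq'
  have : Nonempty (Fin t) := ⟨⟨0, ht0⟩⟩
  have : Nonempty (Fin (n + 1 - t)) := ⟨⟨0, by omega⟩⟩
  obtain ⟨w, hw0, hw, j, hj⟩ := exists_fromBlocks_mulVec_eq_zero_apply_eq_zero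
    (B.map φ) (C.map φ) (by simp only [Fintype.card_fin]; omega)
  set e := finSumFinEquiv.trans (finCongr (Nat.add_sub_cancel' htv.le))
  refine apply_ne_zero_of_bidiagonal_equiv_mulVec_eq_zero RatFunc.transcendental_X hP hQ (w := w ∘ e.symm)
    ?_ ?_ (e j) (by simpa using hj)
  · exact fun h => hw0 (by simpa [Function.comp_assoc] using congrArg (· ∘ e) h)
  · rw [heq', submatrix_mulVec_equiv, Equiv.symm_symm, Function.comp_assoc, e.symm_comp_self,
      Function.comp_id, hw, Pi.zero_comp]
end

section
/- Let R be a ring, M an R-module, and suppose M = ⊕_{k=1}^n M_k with each M_k nonzero. Choose generators of M by taking the union of generating sets of the M_k. Then there exists a generating set ℛ of the relationship submodule such that the associated equivalence relation on the index set has at least n equivalence classes; consequently sup over all choices of generators and relationship sets of the number of equivalence classes is at least the number of nonzero summands in any direct sum decomposition of M. -/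
/-- Auxiliary: for an independent family of submodules, if elements of the
summands sum to zero then each is zero. -/
lemma stmt11_aux {R : Type*} [Ring R] {M : Type*} [AddCommGroup M] [Module R M]
    {n : ℕ} {N : Fin n → Submodule R M} (h : iSupIndep N)
    (x : Fin n → M) (hx : ∀ k, x k ∈ N k) (hsum : ∑ k, x k = 0) :
    ∀ k, x k = 0 := by
  classical
  have hinj := h.dfinsupp_lsum_injective
  set d : Π₀ k : Fin n, ↥(N k) := ∑ k, DFinsupp.single k ⟨x k, hx k⟩ with hd
  have h1 : DFinsupp.lsum ℕ (M := fun k ↦ ↥(N k)) (fun k => (N k).subtype) d = 0 := by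
    rw [hd, map_sum]
    simpa [DFinsupp.lsum_single] using hsum
  have h2 : d = 0 := hinj (by simpa using h1)
  intro k
  have := DFunLike.congr_fun h2 k
  simp only [hd, DFinsupp.finset_sum_apply, DFinsupp.zero_apply] at this
  rw [Finset.sum_eq_single k (fun b _ hb => by
    simp [DFinsupp.single_apply, hb]) (by simp)] at this
  simpa [DFinsupp.single_apply] using Subtype.ext_iff.mp this

/-- If `M = ⊕_{k} M_k` (internal, each summand nonzero) and the generators are
the union of generating sets of the summands, then some generating set `ℛ` of the
relationship submodule makes the associated equivalence relation have at least `n`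
equivalence classes. -/
theorem stmt11 (R : Type*) [Ring R] (M : Type*) [AddCommGroup M] [Module R M]
    (n : ℕ) (N : Fin n → Submodule R M)
    (hInt : DirectSum.IsInternal N) (hne : ∀ k, N k ≠ ⊥)
    (ι : Type*) (κ : ι → Fin n) (g : ι → M) (hg0 : ∀ i, g i ≠ 0)
    (hgk : ∀ k : Fin n, Submodule.span R (g '' {i | κ i = k}) = N k) :
    ∃ ℛ : Set (ι →₀ R),
      Submodule.span R ℛ = LinearMap.ker (Finsupp.linearCombination R g) ∧
      ∃ rep : Fin n → ι, Function.Injective rep ∧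
        ∀ a b : Fin n, a ≠ b →
          ¬ Relation.ReflTransGen (fun i j => ∃ r ∈ ℛ, r i ≠ 0 ∧ r j ≠ 0)
            (rep a) (rep b) := by
  classical
  set ℛ : Set (ι →₀ R) :=
    {r | r ∈ LinearMap.ker (Finsupp.linearCombination R g) ∧
      ∀ i j : ι, r i ≠ 0 → r j ≠ 0 → κ i = κ j} with hℛ
  refine ⟨ℛ, ?_, ?_⟩
  · apply le_antisymm
    · rw [Submodule.span_le]
      exact fun r hr => hr.1
    · intro r hr
      -- split r into the pieces supported on each κ-block
      set rk : Fin n → (ι →₀ R) := fun k => r.filter (fun i => κ i = k) with hrk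
      have hval : ∀ k i, rk k i = if κ i = k then r i else 0 := by
        intro k i; simp [hrk, Finsupp.filter_apply]
      have hsplit : r = ∑ k, rk k := by
        ext i
        rw [Finsupp.finset_sum_apply]
        rw [Finset.sum_eq_single (κ i) (fun b _ hb => by rw [hval]; exact if_neg fun h => hb h.symm) (by simp)]
        simp [hval]
      have hmem : ∀ k, Finsupp.linearCombination R g (rk k) ∈ N k := by
        intro k
        rw [Finsupp.linearCombination_apply, Finsupp.sum]
        apply Submodule.sum_mem
        intro i hi
        have hik : κ i = k := by
          by_contra hik
          simp [hval, hik, Finsupp.mem_support_iff] at hi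
        apply Submodule.smul_mem
        rw [← hgk k]
        exact Submodule.subset_span ⟨i, hik, rfl⟩
      have hsum0 : ∑ k, Finsupp.linearCombination R g (rk k) = 0 := by
        rw [← map_sum, ← hsplit]
        exact hr
      have hzero := stmt11_aux hInt.submodule_iSupIndep _ hmem hsum0
      rw [hsplit]
      apply Submodule.sum_mem
      intro k _
      apply Submodule.subset_span
      refine ⟨hzero k, fun i j hi hj => ?_⟩
      have hik : κ i = k := by
        by_contra h; exact hi (by simp [hval, h])
      have hjk : κ j = k := by
        by_contra h; exact hj (by simp [hval, h])
      rw [hik, hjk]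
  · -- choose representatives
    have hnon : ∀ k : Fin n, ∃ i, κ i = k := by
      intro k
      by_contra h
      push_neg at h
      apply hne k
      rw [← hgk k]
      have : {i | κ i = k} = (∅ : Set ι) := by
        ext i; simpa using h i
      simp [this]
    choose rep hrep using hnon
    have hκrel : ∀ i j : ι,
        Relation.ReflTransGen (fun i j => ∃ r ∈ ℛ, r i ≠ 0 ∧ r j ≠ 0) i j → κ i = κ j := by
      intro i j hij
      induction hij with
      | refl => rfl
      | tail _ hbc ih =>
        obtain ⟨r, hrℛ, hb, hc⟩ := hbc
        exact ih.trans (hrℛ.2 _ _ hb hc)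
    refine ⟨rep, fun a b hab => ?_, fun a b hab hrel => ?_⟩
    · rw [← hrep a, ← hrep b, hab]
    · exact hab (by rw [← hrep a, ← hrep b, hκrel _ _ hrel])
end
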